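/- arXiv:1202.4821 — 2 statements merged into one kernel-verified Lean document; each statement's English description precedes it below -/
import Mathlib

section
/- Let P be a finite set of points in the upper half-plane with pairwise distinct x-coordinates, and for x ∈ ℝ let F(x) = max_{p ∈ P} dist((x,0), p). If p(x) denotes a point of P achieving this maximum, then for x < x' with unique farthest points p(x) ≠ p(x'), the x-coordinate of p(x) is strictly greater than the x-coordinate of p(x'). -/
/- If `p` is farther than `p'` from `a` while `p'` is farther than `p` from `a'`, adding the two
inequalities between squared distances cancels the norms of `p`, `p'`, `a`, `a'` and leaves
`2 ⟪a' - a, p' - p⟫ < 0`: moving the centre in a direction moves the farthest point against it. -/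

noncomputable def pt (x y : ℝ) : EuclideanSpace ℝ (Fin 2) := WithLp.toLp 2 ![x, y]

open RealInnerProductSpace

theorem inner_sub_sub_neg_of_dist_lt_of_dist_lt {E : Type*} [NormedAddCommGroup E]
    [InnerProductSpace ℝ E] {a a' p p' : E} (h : dist a p' < dist a p)
    (h' : dist a' p < dist a' p') : ⟪a' - a, p' - p⟫ < 0 := by
  rw [dist_eq_norm, dist_eq_norm] at h h'
  have hsq := pow_lt_pow_left₀ h (norm_nonneg _) two_ne_zero
  have hsq' := pow_lt_pow_left₀ h' (norm_nonneg _) two_ne_zero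
  simp only [norm_sub_sq_real] at hsq hsq'
  simp only [inner_sub_left, inner_sub_right] at hsq hsq' ⊢
  linarith [real_inner_comm a' p, real_inner_comm a' p']

theorem inner_pt_sub_pt (x x' : ℝ) (v : EuclideanSpace ℝ (Fin 2)) :
    ⟪pt x' 0 - pt x 0, v⟫ = (x' - x) * v 0 := by
  simp [pt, EuclideanSpace.inner_eq_star_dotProduct, dotProduct, Fin.sum_univ_two, mul_comm]

theorem farthest_point_x_antitone_general
    (P : Finset (EuclideanSpace ℝ (Fin 2)))
    (x x' : ℝ) (hxx : x < x')
    (p p' : EuclideanSpace ℝ (Fin 2)) (hp : p ∈ P) (hp' : p' ∈ P)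
    (hfar : ∀ q ∈ P, q ≠ p → dist (pt x 0) q < dist (pt x 0) p)
    (hfar' : ∀ q ∈ P, q ≠ p' → dist (pt x' 0) q < dist (pt x' 0) p')
    (hne : p ≠ p') :
    p' 0 < p 0 := by
  have hinner := inner_sub_sub_neg_of_dist_lt_of_dist_lt (hfar p' hp' hne.symm) (hfar' p hp hne)
  rw [inner_pt_sub_pt, PiLp.sub_apply] at hinner
  nlinarith

/-- For a finite set `P` in the upper half-plane with pairwise distinct
x-coordinates, if `x < x'` and `p` (resp. `p'`) is the unique farthest point of `P`
from `(x,0)` (resp. `(x',0)`), and `p ≠ p'`, then the x-coordinate of `p` is strictly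
greater than that of `p'`. -/
theorem farthest_point_x_antitone
    (P : Finset (EuclideanSpace ℝ (Fin 2))) (hPne : P.Nonempty)
    (hup : ∀ q ∈ P, 0 ≤ q 1)
    (hdist : ∀ q ∈ P, ∀ q' ∈ P, q 0 = q' 0 → q = q')
    (x x' : ℝ) (hxx : x < x')
    (p p' : EuclideanSpace ℝ (Fin 2)) (hp : p ∈ P) (hp' : p' ∈ P)
    (hfar : ∀ q ∈ P, q ≠ p → dist (pt x 0) q < dist (pt x 0) p)
    (hfar' : ∀ q ∈ P, q ≠ p' → dist (pt x' 0) q < dist (pt x' 0) p')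
    (hne : p ≠ p') :
    p' 0 < p 0 :=
  farthest_point_x_antitone_general P x x' hxx p p' hp hp' hfar hfar' hne
end

section
/- Let P = {p₁, …, p_n} be points in the upper half-plane with strictly increasing x-coordinates, and let D₁, …, D_k be an optimal covering by axis-centered disks (minimizing ∑ r(D_i)^α, α ≥ 1) with centers in strictly increasing x-order, chosen lexicographically leftmost. Then there exist indices 0 = j₀ < j₁ < ⋯ < j_k = n such that the blocks P_m = {p_{j_{m−1}+1}, …, p_{j_m}} satisfy: replacing each D_m by a smallest axis-centered disk C_m enclosing P_m yields a covering of P with the same total cost ∑ r(C_m)^α = ∑ r(D_m)^α. -/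
noncomputable def axisDisk (c r : ℝ) : Set (EuclideanSpace ℝ (Fin 2)) :=
  Metric.closedBall (pt c 0) r

noncomputable def encRad (S : Set (EuclideanSpace ℝ (Fin 2))) : ℝ :=
  sInf {r : ℝ | 0 ≤ r ∧ ∃ c : ℝ, S ⊆ Metric.closedBall (pt c 0) r}

/-!
Two facts drive the proof. First, in the lexicographically leftmost optimal covering every disk
owns a private point: a disk without one could be moved to the left, giving an equally cheap,
lexicographically smaller covering. Second, axis-centred disks do not cross: if a point lies in
a disk whose centre is to the right of the centre of a disk containing a later point, then one
of the two disks contains both points, since adding the two violated squared-distance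
inequalities would give `(x' - x) (c - c') < 0`.

Sending each point to the largest among the least disks covering the points up to it is
therefore a monotone choice of a covering disk, and it is onto by the private points. Its fibres
are the consecutive blocks; their smallest enclosing disks are no larger than the original ones,
so by optimality the cost does not change.
-/

open Filter Finset

lemma dist_pt_sq (q : EuclideanSpace ℝ (Fin 2)) (c : ℝ) :
    dist q (pt c 0) ^ 2 = (q 0 - c) ^ 2 + q 1 ^ 2 := by
  rw [EuclideanSpace.dist_eq, Real.sq_sqrt (by positivity)]
  simp [Fin.sum_univ_two, pt, Real.dist_eq, sq_abs]

lemma isometry_pt : Isometry (fun c : ℝ => pt c 0) := by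
  refine Isometry.of_dist_eq fun a b => ?_
  rw [← sq_eq_sq₀ dist_nonneg dist_nonneg, dist_pt_sq, Real.dist_eq, sq_abs]
  simp [pt]

lemma axisDisk_uncross {q q' : EuclideanSpace ℝ (Fin 2)} {c c' r r' : ℝ} (hq : q 0 < q' 0)
    (hc : c' < c) (hqr : q ∈ axisDisk c r) (hq'l : q' ∈ axisDisk c' r') :
    q ∈ axisDisk c' r' ∨ q' ∈ axisDisk c r := by
  simp only [axisDisk, Metric.mem_closedBall] at *
  by_contra! h
  have hl : dist q' (pt c' 0) ^ 2 < dist q (pt c' 0) ^ 2 := by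
    gcongr; exact hq'l.trans_lt h.1
  have hr : dist q (pt c 0) ^ 2 < dist q' (pt c 0) ^ 2 := by
    gcongr; exact hqr.trans_lt h.2
  rw [dist_pt_sq, dist_pt_sq] at hl hr
  nlinarith [mul_pos (sub_pos.2 hq) (sub_pos.2 hc)]

lemma encRad_le {S : Set (EuclideanSpace ℝ (Fin 2))} {c r : ℝ} (hr : 0 ≤ r)
    (hS : S ⊆ axisDisk c r) : encRad S ≤ r :=
  csInf_le ⟨0, fun _ hr => hr.1⟩ ⟨hr, c, hS⟩

lemma encRad_nonneg (S : Set (EuclideanSpace ℝ (Fin 2))) : 0 ≤ encRad S :=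
  Real.sInf_nonneg fun _ hr => hr.1

lemma exists_forall_sup'_dist_pt_le {T : Finset (EuclideanSpace ℝ (Fin 2))} (hT : T.Nonempty) :
    ∃ c₀, ∀ c, T.sup' hT (dist · (pt c₀ 0)) ≤ T.sup' hT (dist · (pt c 0)) := by
  have ⟨q, hq⟩ := hT
  refine Continuous.exists_forall_le ?_ ?_
  · exact Continuous.finset_sup'_apply _ fun q _ => continuous_const.dist isometry_pt.continuous
  · refine tendsto_atTop_mono (fun c => T.le_sup' (dist · (pt c 0)) hq) ?_
    exact (tendsto_dist_left_cocompact_atTop q).comp isometry_pt.isClosedEmbedding.tendsto_cocompact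

lemma exists_subset_axisDisk_encRad {S : Set (EuclideanSpace ℝ (Fin 2))} (hS : S.Nonempty)
    (hfin : S.Finite) : ∃ c, S ⊆ axisDisk c (encRad S) := by
  lift S to Finset (EuclideanSpace ℝ (Fin 2)) using hfin
  have hT : S.Nonempty := Finset.coe_nonempty.1 hS
  obtain ⟨c₀, hc₀⟩ := exists_forall_sup'_dist_pt_le hT
  have ⟨q, hq⟩ := hT
  set R := S.sup' hT (dist · (pt c₀ 0))
  have hsub : (S : Set _) ⊆ axisDisk c₀ R :=
    fun q hq => Metric.mem_closedBall.2 (S.le_sup' (dist · (pt c₀ 0)) hq)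
  have hR0 : 0 ≤ R := dist_nonneg.trans (S.le_sup' (dist · (pt c₀ 0)) hq)
  have : encRad S = R := by
    refine le_antisymm (encRad_le hR0 hsub) (le_csInf ⟨_, hR0, c₀, hsub⟩ ?_)
    rintro r ⟨-, c, hc⟩
    exact (hc₀ c).trans (Finset.sup'_le _ _ fun q hq => hc hq)
  exact ⟨c₀, this ▸ hsub⟩

lemma exists_private_point_of_lex_leftmost {ι κ : Type*} [Fintype κ] [LinearOrder κ]
    {p : ι → EuclideanSpace ℝ (Fin 2)} {α : ℝ} {D : κ → ℝ × ℝ} (hr : ∀ m, 0 ≤ (D m).2)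
    (hcov : ∀ i, ∃ m, p i ∈ axisDisk (D m).1 (D m).2)
    (hleft : ∀ E : κ → ℝ × ℝ, (∀ j, 0 ≤ (E j).2) →
      (∀ i, ∃ j, p i ∈ axisDisk (E j).1 (E j).2) →
      (∑ j, (E j).2 ^ α = ∑ m, (D m).2 ^ α) →
      ¬ Pi.Lex (· < ·) (· < ·) (fun j => (E j).1) (fun m => (D m).1)) (m : κ) :
    ∃ i, p i ∈ axisDisk (D m).1 (D m).2 ∧ ∀ m', p i ∈ axisDisk (D m').1 (D m').2 → m' = m := by
  by_contra! hshared
  set E := Function.update D m ((D m).1 - 1, (D m).2)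
  have hrad : ∀ j, (E j).2 = (D j).2 := fun j => by
    rcases eq_or_ne j m with rfl | hj <;> simp [E, *]
  refine hleft E (fun j => hrad j ▸ hr j) (fun i => ?_) (by simp only [hrad])
    ⟨m, fun j hj => by simp [E, hj.ne], by simp [E]⟩
  obtain ⟨m', hm'⟩ := hcov i
  rcases eq_or_ne m' m with rfl | hne
  · obtain ⟨m'', hm'', hne⟩ := hshared i hm'
    exact ⟨m'', by simpa [E, hne] using hm''⟩
  · exact ⟨m', by simpa [E, hne] using hm'⟩

lemma exists_monotone_forall_of_uncross {ι κ : Type*} [Fintype ι] [LinearOrder ι] [Fintype κ]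
    [LinearOrder κ] {R : ι → κ → Prop} (hR : ∀ i, ∃ m, R i m)
    (huncross : ∀ i j m m', i < j → m' < m → R i m → R j m' → R i m' ∨ R j m) :
    ∃ f : ι → κ, Monotone f ∧ ∀ i, R i (f i) := by
  classical
  have hne : ∀ i, (univ.filter (R i)).Nonempty := fun i =>
    let ⟨m, hm⟩ := hR i; ⟨m, by simpa using hm⟩
  set g : ι → κ := fun i => (univ.filter (R i)).min' (hne i)
  have hg : ∀ i, R i (g i) := fun i => by simpa using min'_mem _ (hne i)
  have hg_le : ∀ i m, R i m → g i ≤ m := fun i m hm => min'_le _ _ (by simpa using hm)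
  have hself : ∀ i : ι, i ∈ univ.filter (· ≤ i) := fun i => by simp
  have hlower : ∀ i : ι, (univ.filter (· ≤ i)).Nonempty := fun i => ⟨i, hself i⟩
  refine ⟨fun i => (univ.filter (· ≤ i)).sup' (hlower i) g, fun i i' hii' => ?_, fun i => ?_⟩
  · refine sup'_mono g (fun j hj => ?_) _
    simp only [mem_filter] at hj ⊢
    exact ⟨hj.1, hj.2.trans hii'⟩
  · obtain ⟨j, hji, hfj⟩ := exists_mem_eq_sup' (hlower i) g
    have hgi : g i ≤ g j := hfj ▸ le_sup' g (hself i)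
    dsimp only
    rw [hfj]
    rcases hgi.lt_or_eq with hlt | heq
    · have hji : j < i := (mem_filter.1 hji).2.lt_of_ne (by rintro rfl; exact hlt.false)
      exact (huncross j i (g j) (g i) hji hlt (hg j) (hg i)).resolve_left
        fun h => (hg_le j _ h).not_gt hlt
    · exact heq ▸ hg i

lemma Fin.mem_iff_lt_card_of_isLowerSet {n : ℕ} {s : Finset (Fin n)}
    (hs : IsLowerSet (s : Set (Fin n))) (i : Fin n) : i ∈ s ↔ (i : ℕ) < #s := by
  constructor
  · intro hi
    have := card_le_card fun j hj => hs (mem_Iic.1 hj) hi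
    rw [Fin.card_Iic] at this
    omega
  · intro hi
    by_contra hns
    have := card_le_card fun j hj => mem_Iio.2 (lt_of_not_ge fun hij => hns (hs hij hj))
    rw [Fin.card_Iio] at this
    omega

lemma Fin.exists_fiber_iff_of_monotone_surjective {n k : ℕ} {f : Fin n → Fin k}
    (hf : Monotone f) (hsurj : Function.Surjective f) :
    ∃ J : ℕ → ℕ, J 0 = 0 ∧ J k = n ∧ (∀ m < k, J m < J (m + 1)) ∧
      ∀ (m : Fin k) (i : Fin n), J m ≤ i ∧ (i : ℕ) < J (m + 1) ↔ f i = m := by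
  classical
  set J : ℕ → ℕ := fun m => #{i | (f i : ℕ) < m}
  have hJ : ∀ m i, (f i : ℕ) < m ↔ (i : ℕ) < J m := fun m i => by
    have hlower : IsLowerSet (({i | (f i : ℕ) < m} : Finset (Fin n)) : Set (Fin n)) := by
      intro a b hba ha
      simp only [coe_filter, mem_univ, true_and] at ha ⊢
      exact (Fin.le_iff_val_le_val.1 (hf hba)).trans_lt ha
    simpa using Fin.mem_iff_lt_card_of_isLowerSet hlower i
  have hfiber : ∀ (m : Fin k) (i : Fin n), J m ≤ i ∧ (i : ℕ) < J (m + 1) ↔ f i = m := by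
    intro m i
    rw [← not_lt, ← hJ, ← hJ, Fin.ext_iff]
    omega
  refine ⟨J, by simp [J], by simp [J], fun m hm => ?_, hfiber⟩
  obtain ⟨i, hi⟩ := hsurj ⟨m, hm⟩
  have := (hfiber ⟨m, hm⟩ i).2 hi
  simp only at this
  omega

theorem consecutive_partition_structure_general (n : ℕ)
    (p : Fin n → EuclideanSpace ℝ (Fin 2))
    (hx : StrictMono (fun i => p i 0))
    (α : ℝ) (hα : 1 ≤ α)
    (k : ℕ) (D : Fin k → ℝ × ℝ) (hr : ∀ i, 0 ≤ (D i).2)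
    (hcenters : StrictMono (fun i => (D i).1))
    (hcov : ∀ i : Fin n, ∃ m, p i ∈ axisDisk (D m).1 (D m).2)
    (hopt : ∀ (l : ℕ) (E : Fin l → ℝ × ℝ), (∀ j, 0 ≤ (E j).2) →
      (∀ i : Fin n, ∃ j, p i ∈ axisDisk (E j).1 (E j).2) →
      ∑ m, (D m).2 ^ α ≤ ∑ j, (E j).2 ^ α)
    (hleft : ∀ E : Fin k → ℝ × ℝ, (∀ j, 0 ≤ (E j).2) →
      (∀ i : Fin n, ∃ j, p i ∈ axisDisk (E j).1 (E j).2) →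
      (∑ j, (E j).2 ^ α = ∑ m, (D m).2 ^ α) →
      ¬ Pi.Lex (· < ·) (· < ·) (fun j => (E j).1) (fun m => (D m).1)) :
    ∃ J : ℕ → ℕ, J 0 = 0 ∧ J k = n ∧ (∀ m < k, J m < J (m + 1)) ∧
      ∃ C : Fin k → ℝ × ℝ,
        (∀ m : Fin k,
          {q | ∃ i : Fin n, J m ≤ (i : ℕ) ∧ (i : ℕ) < J (m + 1) ∧ q = p i} ⊆
            axisDisk (C m).1 (C m).2 ∧
          (C m).2 = encRad {q | ∃ i : Fin n, J m ≤ (i : ℕ) ∧ (i : ℕ) < J (m + 1) ∧ q = p i}) ∧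
        (∀ i : Fin n, ∃ m, p i ∈ axisDisk (C m).1 (C m).2) ∧
        ∑ m, (C m).2 ^ α = ∑ m, (D m).2 ^ α := by
  obtain ⟨f, hf_mono, hf⟩ := exists_monotone_forall_of_uncross hcov
    fun i j m m' hij hm => axisDisk_uncross (hx hij) (hcenters hm)
  have hf_surj : Function.Surjective f := fun m =>
    let ⟨i, _, hi⟩ := exists_private_point_of_lex_leftmost hr hcov hleft m
    ⟨i, hi _ (hf i)⟩
  obtain ⟨J, hJ0, hJk, hJ_lt, hfiber⟩ :=
    Fin.exists_fiber_iff_of_monotone_surjective hf_mono hf_surj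
  have hblock : ∀ m : Fin k, {q | ∃ i : Fin n, J m ≤ (i : ℕ) ∧ (i : ℕ) < J (m + 1) ∧ q = p i} =
      p '' {i | f i = m} := fun m => by
    ext q
    simp only [Set.mem_ofPred_eq, Set.mem_image, ← and_assoc, hfiber, eq_comm (a := q)]
  refine ⟨J, hJ0, hJk, hJ_lt, ?_⟩
  simp only [hblock]
  choose c hc using fun m =>
    exists_subset_axisDisk_encRad (Set.Nonempty.image p (hf_surj m)) ((Set.toFinite _).image p)
  refine ⟨fun m => (c m, encRad (p '' {i | f i = m})), fun m => ⟨hc m, rfl⟩,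
    fun i => ⟨f i, hc _ ⟨i, rfl, rfl⟩⟩, ?_⟩
  refine le_antisymm (sum_le_sum fun m _ => ?_) (hopt k _ (fun m => encRad_nonneg _)
    fun i => ⟨f i, hc _ ⟨i, rfl, rfl⟩⟩)
  dsimp only
  refine Real.rpow_le_rpow (encRad_nonneg _) (encRad_le (c := (D m).1) (hr m) ?_) (by linarith)
  rintro _ ⟨i, rfl, rfl⟩
  exact hf i

/-- Structural theorem behind the consecutive-partition DP.  Let
`p 0, …, p (n-1)` be upper half-plane points with strictly increasing x-coordinates and
let `D₁, …, D_k` be the lexicographically leftmost optimal covering by axis-centered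
disks, with centers in strictly increasing order.  Then the points can be split into
`k` consecutive blocks by indices `0 = J 0 < J 1 < ⋯ < J k = n` such that replacing
each `D_m` by a smallest axis-centered disk `C_m` enclosing its block yields a
covering of `P` of the same total cost. -/
theorem consecutive_partition_structure (n : ℕ) (hn : 0 < n)
    (p : Fin n → EuclideanSpace ℝ (Fin 2))
    (hup : ∀ i, 0 ≤ p i 1)
    (hx : StrictMono (fun i => p i 0))
    (α : ℝ) (hα : 1 ≤ α)
    (k : ℕ) (D : Fin k → ℝ × ℝ) (hr : ∀ i, 0 ≤ (D i).2)
    (hcenters : StrictMono (fun i => (D i).1))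
    (hcov : ∀ i : Fin n, ∃ m, p i ∈ axisDisk (D m).1 (D m).2)
    (hopt : ∀ (l : ℕ) (E : Fin l → ℝ × ℝ), (∀ j, 0 ≤ (E j).2) →
      (∀ i : Fin n, ∃ j, p i ∈ axisDisk (E j).1 (E j).2) →
      ∑ m, (D m).2 ^ α ≤ ∑ j, (E j).2 ^ α)
    (hleft : ∀ E : Fin k → ℝ × ℝ, (∀ j, 0 ≤ (E j).2) →
      (∀ i : Fin n, ∃ j, p i ∈ axisDisk (E j).1 (E j).2) →
      (∑ j, (E j).2 ^ α = ∑ m, (D m).2 ^ α) →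
      ¬ Pi.Lex (· < ·) (· < ·) (fun j => (E j).1) (fun m => (D m).1)) :
    ∃ J : ℕ → ℕ, J 0 = 0 ∧ J k = n ∧ (∀ m < k, J m < J (m + 1)) ∧
      ∃ C : Fin k → ℝ × ℝ,
        (∀ m : Fin k,
          {q | ∃ i : Fin n, J m ≤ (i : ℕ) ∧ (i : ℕ) < J (m + 1) ∧ q = p i} ⊆
            axisDisk (C m).1 (C m).2 ∧
          (C m).2 = encRad {q | ∃ i : Fin n, J m ≤ (i : ℕ) ∧ (i : ℕ) < J (m + 1) ∧ q = p i}) ∧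
        (∀ i : Fin n, ∃ m, p i ∈ axisDisk (C m).1 (C m).2) ∧
        ∑ m, (C m).2 ^ α = ∑ m, (D m).2 ^ α :=
  consecutive_partition_structure_general n p hx α hα k D hr hcenters hcov hopt hleft
end
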